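/- For unit-size jobs, any two greedy schedules give the same total value: in every time step both schedules start the same number of jobs (proved by induction on t: if both greedy schedules have started the same number of jobs before time t, then the number of waiting jobs at t is equal in both, so both start min(m, #waiting) jobs at t). -/

import Mathlib

/-!
The number of jobs a greedy schedule starts at time `t` is `min m (#released − #started)`,
where `#released` counts the jobs with release time `≤ t` and `#started` those started before `t`.
The first term does not depend on the schedule, so by induction on `t` two greedy schedules have
started equally many jobs before every time, hence start equally many jobs at every time. The
multiset of start times is determined by these counts.
-/

open Finset

/-- A greedy schedule for unit-size jobs on `m` machines. -/
def GreedySchedule {ι : Type*} [Fintype ι] [DecidableEq ι]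
    (m : ℕ) (r : ι → ℕ) (start : ι → ℕ) : Prop :=
  (∀ i, r i ≤ start i) ∧
  ∀ t : ℕ, (Finset.univ.filter (fun i => start i = t)).card =
    min m ((Finset.univ.filter (fun i => r i ≤ t ∧ t ≤ start i)).card)

section StartCounts

variable {ι : Type*} [Fintype ι]

theorem card_filter_lt_succ (f : ι → ℕ) (n : ℕ) :
    #{i | f i < n + 1} = #{i | f i < n} + #{i | f i = n} := by
  classical
  rw [← card_union_of_disjoint]
  · congr 1
    ext i
    simp only [mem_filter, mem_union, mem_univ, true_and]
    omega
  · simp only [disjoint_left, mem_filter, mem_univ, true_and]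
    omega

theorem map_univ_eq_of_card_filter_eq {f g : ι → ℕ}
    (h : ∀ a, #{i | f i = a} = #{i | g i = a}) :
    univ.val.map f = univ.val.map g := by
  ext a
  simp only [Multiset.count_map, ← filter_val, card_val]
  simpa only [eq_comm] using h a

theorem map_filter_lt_eq_of_card_filter_eq {f g : ι → ℕ}
    (h : ∀ a, #{i | f i = a} = #{i | g i = a}) (t : ℕ) :
    (univ.filter (f · < t)).val.map f = (univ.filter (g · < t)).val.map g := by
  have map_filter (k : ι → ℕ) :
      (univ.filter (k · < t)).val.map k = (univ.val.map k).filter (· < t) := by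
    rw [Multiset.filter_map]
    rfl
  rw [map_filter, map_filter, map_univ_eq_of_card_filter_eq h]

theorem card_waiting_eq_sub {r start : ι → ℕ} (hr : ∀ i, r i ≤ start i) (t : ℕ) :
    #{i | r i ≤ t ∧ t ≤ start i} = #{i | r i ≤ t} - #{i | start i < t} := by
  classical
  have hsub : univ.filter (start · < t) ⊆ univ.filter (r · ≤ t) := by
    intro i
    simp only [mem_filter, mem_univ, true_and]
    exact fun hi => (hr i).trans hi.le
  rw [← card_sdiff_of_subset hsub]
  congr 1
  ext i
  simp only [mem_filter, mem_sdiff, mem_univ, true_and, not_lt]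

variable [DecidableEq ι] {m : ℕ} {r start : ι → ℕ}

theorem GreedySchedule.card_start_eq_min (h : GreedySchedule m r start) (t : ℕ) :
    #{i | start i = t} = min m (#{i | r i ≤ t} - #{i | start i < t}) := by
  rw [h.2 t, card_waiting_eq_sub h.1 t]

theorem GreedySchedule.card_start_lt_eq_card_start_lt {start₁ start₂ : ι → ℕ}
    (h₁ : GreedySchedule m r start₁) (h₂ : GreedySchedule m r start₂) (t : ℕ) :
    #{i | start₁ i < t} = #{i | start₂ i < t} := by
  induction t with
  | zero => simp
  | succ n ih =>
    rw [card_filter_lt_succ, card_filter_lt_succ, h₁.card_start_eq_min, h₂.card_start_eq_min,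
      ih]

theorem GreedySchedule.card_start_eq_card_start {start₁ start₂ : ι → ℕ}
    (h₁ : GreedySchedule m r start₁) (h₂ : GreedySchedule m r start₂) (t : ℕ) :
    #{i | start₁ i = t} = #{i | start₂ i = t} := by
  rw [h₁.card_start_eq_min, h₂.card_start_eq_min, h₁.card_start_lt_eq_card_start_lt h₂]

end StartCounts

theorem greedy_unit_jobs_same_value_general {ι : Type*} [Fintype ι] [DecidableEq ι]
    (m : ℕ) (r : ι → ℕ) (start₁ start₂ : ι → ℕ)
    (h₁ : GreedySchedule m r start₁) (h₂ : GreedySchedule m r start₂) :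
    (∀ t : ℕ, (Finset.univ.filter (fun i => start₁ i = t)).card =
        (Finset.univ.filter (fun i => start₂ i = t)).card) ∧
    (∀ t : ℕ, ∀ value : Multiset ℕ → ℝ,
      value (((Finset.univ.filter (fun i => start₁ i < t)).val).map start₁) =
        value (((Finset.univ.filter (fun i => start₂ i < t)).val).map start₂)) := by
  have hcount := h₁.card_start_eq_card_start h₂
  exact ⟨hcount, fun t value => congrArg value (map_filter_lt_eq_of_card_filter_eq hcount t)⟩

/-- Any two greedy schedules of unit-size jobs start the same number of jobs in
every time step; consequently any value function depending only on the multiset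
of start times of jobs started before `t` gives both schedules the same value. -/
theorem greedy_unit_jobs_same_value {ι : Type*} [Fintype ι] [DecidableEq ι]
    (m : ℕ) (hm : 1 ≤ m) (r : ι → ℕ) (start₁ start₂ : ι → ℕ)
    (h₁ : GreedySchedule m r start₁) (h₂ : GreedySchedule m r start₂) :
    (∀ t : ℕ, (Finset.univ.filter (fun i => start₁ i = t)).card =
        (Finset.univ.filter (fun i => start₂ i = t)).card) ∧
    (∀ t : ℕ, ∀ value : Multiset ℕ → ℝ,
      value (((Finset.univ.filter (fun i => start₁ i < t)).val).map start₁) =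
        value (((Finset.univ.filter (fun i => start₂ i < t)).val).map start₂)) :=
  greedy_unit_jobs_same_value_general m r start₁ start₂ h₁ h₂
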